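/- (Necessity for 2-vertex-connected subgraphs.) Suppose Γ is 2-vertex connected, has at least two vertices and has no 1-valent vertices. If φ is C₀-ample on Γ in Γ', then deg(D_φ) ≥ 2 and deg(D_φ|_{ℙ¹_v}) ≥ 1 for every vertex v of Γ with φ(v) = h. -/

import Mathlib

attribute [local instance] Classical.propDecidable

/-- A finite graph `Σ` with bounded edges (each joining two distinct vertices)
and unbounded edges (leaves, each attached to a single vertex).  Each bounded
edge `e` carries a direction vector `dir e ∈ ℤ^n` at its source (the direction
at the target endpoint is `-dir e`), and each unbounded edge `u` carries a
direction vector `udir u` at its attaching vertex. -/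
structure TropGraph (n : ℕ) where
  V : Type
  BE : Type
  UE : Type
  [fintV : Fintype V]
  [fintBE : Fintype BE]
  [fintUE : Fintype UE]
  src : BE → V
  tgt : BE → V
  src_ne_tgt : ∀ e, src e ≠ tgt e
  att : UE → V
  dir : BE → Fin n → ℤ
  udir : UE → Fin n → ℤ

attribute [instance] TropGraph.fintV TropGraph.fintBE TropGraph.fintUE

/-- `⟨m, d⟩ = Σ i, m i * d i`. -/
def pairDot {n : ℕ} (m d : Fin n → ℤ) : ℤ := ∑ i, m i * d i

namespace TropGraph

variable {n : ℕ}

/-- The degree of a vertex: the number of edge-endpoints at `v`. -/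
noncomputable def degree (G : TropGraph n) (v : G.V) : ℕ :=
  (Finset.univ.filter (fun e => G.src e = v)).card +
    (Finset.univ.filter (fun e => G.tgt e = v)).card +
    (Finset.univ.filter (fun u => G.att u = v)).card

/-- A piecewise-linear function on `Σ` with integer slopes: real values at the
vertices, differing by integers along bounded edges (which have length 1, so the
slope of `φ` at `src e` along a bounded edge `e` is `φ(tgt e) - φ(src e)`),
together with an assigned integer slope on each unbounded edge. -/
structure PL (G : TropGraph n) where
  val : G.V → ℝ
  uslope : G.UE → ℤ
  int_slope : ∀ e : G.BE, ∃ k : ℤ, val (G.tgt e) - val (G.src e) = (k : ℝ)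

namespace PL

variable {G : TropGraph n}

/-- `φ` is nonnegative: all vertex values and all slopes on unbounded edges are `≥ 0`. -/
def Nonneg (φ : PL G) : Prop := (∀ v, 0 ≤ φ.val v) ∧ ∀ u, 0 ≤ φ.uslope u

/-- The sum `Σ_{e ∋ v} s_φ(v,e)` of the slopes of `φ` at `v` along all edges at `v`,
so that the Laplacian is `Δ(φ)(v) = -slopeSum φ v`. -/
noncomputable def slopeSum (φ : PL G) (v : G.V) : ℝ :=
  (∑ e ∈ Finset.univ.filter (fun e => G.src e = v), (φ.val (G.tgt e) - φ.val (G.src e))) +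
    (∑ e ∈ Finset.univ.filter (fun e => G.tgt e = v), (φ.val (G.src e) - φ.val (G.tgt e))) +
    ∑ u ∈ Finset.univ.filter (fun u => G.att u = v), (φ.uslope u : ℝ)

/-- Condition (1): `Δ(φ) + K_Σ ≥ 0`, i.e. `Σ_{e ∋ v} s_φ(v,e) ≤ deg v - 2` for all `v`. -/
def CanonicalBound (φ : PL G) : Prop := ∀ v : G.V, φ.slopeSum v ≤ (G.degree v : ℝ) - 2

/-- Condition (2): `φ` vanishes identically on every edge `e` with `m·e ≠ 0`. -/
def VanishesNonOrth (φ : PL G) (m : Fin n → ℤ) : Prop :=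
  (∀ e : G.BE, pairDot m (G.dir e) ≠ 0 → φ.val (G.src e) = 0 ∧ φ.val (G.tgt e) = 0) ∧
    ∀ u : G.UE, pairDot m (G.udir u) ≠ 0 → φ.val (G.att u) = 0 ∧ φ.uslope u = 0

/-- Condition (3): on every edge `e` with `m·e = 0` the slope of `φ` is nonzero. -/
def NonzeroSlopeOrth (φ : PL G) (m : Fin n → ℤ) : Prop :=
  (∀ e : G.BE, pairDot m (G.dir e) = 0 → φ.val (G.src e) ≠ φ.val (G.tgt e)) ∧
    ∀ u : G.UE, pairDot m (G.udir u) = 0 → φ.uslope u ≠ 0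

end PL

end TropGraph

/-- The order of vanishing of a rational function `f` on `ℙ¹ = ℂ ∪ {∞}`
(modeled as `Option ℂ`, with `none` the point at infinity) at a point `q`;
negative at poles.  (For `f = 0` this gives the junk value `0`, i.e. `div 0 = 0`.) -/
noncomputable def ordAt (f : RatFunc ℂ) : Option ℂ → ℤ
  | Option.none => (f.denom.natDegree : ℤ) - (f.num.natDegree : ℤ)
  | Option.some a => (f.num.rootMultiplicity a : ℤ) - (f.denom.rootMultiplicity a : ℤ)

/-- The value of a rational function `f` on `ℙ¹ = ℂ ∪ {∞}` at a point `q`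
(junk value where `f` is not regular). -/
noncomputable def evalAt (f : RatFunc ℂ) : Option ℂ → ℂ
  | Option.none => if f.num.natDegree = f.denom.natDegree then
      f.num.leadingCoeff / f.denom.leadingCoeff else 0
  | Option.some a => RatFunc.eval (RingHom.id ℂ) a f

namespace TropGraph

/-- The coefficient at the point `q` of the component `ℙ¹_v` of the divisor `D_φ`:
`D_φ = Σ_{v, φ(v) = h} Σ_{e ∈ E_v^∂, s_φ(v,e) < 0} (−s_φ(v,e))·(p_e^v)`, where
`E_v^∂` is the set of edges of `Γ'` not in `Γ` incident to `v`, and `p_e^v` is the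
boundary point `pS e`/`pT e`/`pU e` of `ℙ¹_v` assigned to the endpoint `v` of `e`. -/
noncomputable def Dcoef {n : ℕ} (G : TropGraph n) (φ : PL G)
    (E' : Finset G.BE) (U' : Finset G.UE) (EΓ : Finset G.BE)
    (pS pT : G.BE → Option ℂ) (pU : G.UE → Option ℂ) (h : ℝ)
    (v : G.V) (q : Option ℂ) : ℝ :=
  if φ.val v = h then
    (∑ e ∈ E'.filter (fun e => e ∉ EΓ ∧ G.src e = v ∧
        φ.val (G.tgt e) - φ.val (G.src e) < 0 ∧ pS e = q),
        (φ.val (G.src e) - φ.val (G.tgt e))) +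
      (∑ e ∈ E'.filter (fun e => e ∉ EΓ ∧ G.tgt e = v ∧
        φ.val (G.src e) - φ.val (G.tgt e) < 0 ∧ pT e = q),
        (φ.val (G.tgt e) - φ.val (G.src e))) +
      ∑ u ∈ U'.filter (fun u => G.att u = v ∧ φ.uslope u < 0 ∧ pU u = q),
        (-(φ.uslope u) : ℝ)
  else 0

/-- The degree of the part `D_φ|_{ℙ¹_v}` of the divisor `D_φ` supported on the
component `ℙ¹_v`. -/
noncomputable def DdegAt {n : ℕ} (G : TropGraph n) (φ : PL G)
    (E' : Finset G.BE) (U' : Finset G.UE) (EΓ : Finset G.BE) (h : ℝ) (v : G.V) : ℝ :=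
  if φ.val v = h then
    (∑ e ∈ E'.filter (fun e => e ∉ EΓ ∧ G.src e = v ∧
        φ.val (G.tgt e) - φ.val (G.src e) < 0),
        (φ.val (G.src e) - φ.val (G.tgt e))) +
      (∑ e ∈ E'.filter (fun e => e ∉ EΓ ∧ G.tgt e = v ∧
        φ.val (G.src e) - φ.val (G.tgt e) < 0),
        (φ.val (G.tgt e) - φ.val (G.src e))) +
      ∑ u ∈ U'.filter (fun u => G.att u = v ∧ φ.uslope u < 0), (-(φ.uslope u) : ℝ)
  else 0

/-- The total degree `deg(D_φ)` of the divisor `D_φ`. -/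
noncomputable def Ddeg {n : ℕ} (G : TropGraph n) (φ : PL G) (PΓ : Finset G.V)
    (E' : Finset G.BE) (U' : Finset G.UE) (EΓ : Finset G.BE) (h : ℝ) : ℝ :=
  ∑ v ∈ PΓ, DdegAt G φ E' U' EΓ h v

/-- `φ` is `C₀`-ample on `Γ` in `Γ'`: there is a family `(f_v)_{v ∈ V(Γ)}` of rational
functions on the components `ℙ¹_v` of the nodal curve `(C_Γ)₀` with
`div(f_v) + D_φ|_{ℙ¹_v} ≥ 0` (in particular each `f_v` is regular at the node points),
matching at the nodes (`f_v(p_e^v) = f_w(p_e^w)` for every edge `e = vw` of `Γ`), and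
with `f_v` nonconstant precisely for the vertices `v` with `φ(v) = h`. -/
noncomputable def C0Ample {n : ℕ} (G : TropGraph n) (φ : PL G)
    (PΓ : Finset G.V) (E' : Finset G.BE) (U' : Finset G.UE) (EΓ : Finset G.BE)
    (pS pT : G.BE → Option ℂ) (pU : G.UE → Option ℂ) (h : ℝ) : Prop :=
  ∃ f : G.V → RatFunc ℂ,
    (∀ v ∈ PΓ, ∀ q : Option ℂ,
      0 ≤ Dcoef G φ E' U' EΓ pS pT pU h v q + (ordAt (f v) q : ℝ)) ∧
    (∀ e ∈ EΓ, evalAt (f (G.src e)) (pS e) = evalAt (f (G.tgt e)) (pT e)) ∧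
    ∀ v ∈ PΓ, ((¬ ∃ c : ℂ, f v = RatFunc.C c) ↔ φ.val v = h)

end TropGraph

/-!
Every nonconstant `f_v` has a pole, which `D_φ|_{ℙ¹_v}` must cover, so `deg(D_φ|_{ℙ¹_v}) ≥ 1`
at every minimal vertex; two minimal vertices already give `deg(D_φ) ≥ 2`. If the minimum is
attained only at `v`, all other `f_w` are constant and, `Γ - v` being connected, equal to one
constant `c`. As `v` has two distinct edges in `Γ`, `f_v` takes the value `c` at two distinct
node points, where `D_φ` vanishes. A rational function with a single simple pole is a Möbius
transformation, hence injective, so `f_v` needs poles of total order `≥ 2`: `deg(D_φ|_{ℙ¹_v}) ≥ 2`.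
-/

open Polynomial

theorem evalAt_C (c : ℂ) (q : Option ℂ) : evalAt (RatFunc.C c) q = c := by
  cases q <;> simp [evalAt, RatFunc.eval, RatFunc.num_C, RatFunc.denom_C]

namespace RatFunc

variable {K : Type*} [Field K]

theorem eq_C_of_natDegree_eq_zero {f : RatFunc K} (hnum : f.num.natDegree = 0)
    (hdenom : f.denom.natDegree = 0) : f = C (f.num.coeff 0) := by
  rw [← f.num_div_denom, (f.monic_denom.natDegree_eq_zero).mp hdenom,
    Polynomial.eq_C_of_natDegree_eq_zero hnum]
  simp [algebraMap_C]

theorem rootMultiplicity_num_eq_zero {f : RatFunc K} {a : K} (ha : f.denom.IsRoot a) :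
    f.num.rootMultiplicity a = 0 := by
  refine rootMultiplicity_eq_zero fun hnum => ?_
  obtain ⟨u, v, huv⟩ := f.isCoprime_num_denom
  simpa [hnum.eq_zero, ha.eq_zero] using congrArg (Polynomial.eval a) huv

theorem num_sub_C_mul_denom_ne_zero {f : RatFunc K} (hf : ¬∃ c, f = C c) (c : K) :
    f.num - Polynomial.C c * f.denom ≠ 0 := by
  intro h
  refine hf ⟨c, ?_⟩
  rw [← f.num_div_denom, sub_eq_zero.mp h, map_mul, mul_div_assoc,
    div_self (algebraMap_ne_zero f.denom_ne_zero), mul_one, algebraMap_C]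

end RatFunc

theorem ordAt_some_neg_iff {f : RatFunc ℂ} {a : ℂ} : ordAt f (some a) < 0 ↔ f.denom.IsRoot a := by
  constructor
  · intro h
    refine (rootMultiplicity_pos f.denom_ne_zero).mp ?_
    simp only [ordAt] at h
    omega
  · intro ha
    have := (rootMultiplicity_pos f.denom_ne_zero).mpr ha
    simp only [ordAt, RatFunc.rootMultiplicity_num_eq_zero ha]
    omega

theorem exists_ordAt_neg {f : RatFunc ℂ} (hf : ¬∃ c, f = RatFunc.C c) : ∃ q, ordAt f q < 0 := by
  by_cases hdenom : f.denom.natDegree = 0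
  · refine ⟨none, ?_⟩
    have hnum : f.num.natDegree ≠ 0 := fun hnum =>
      hf ⟨_, RatFunc.eq_C_of_natDegree_eq_zero hnum hdenom⟩
    simp only [ordAt, hdenom]
    omega
  · obtain ⟨a, ha⟩ :=
      Complex.exists_root (natDegree_pos_iff_degree_pos.mp (Nat.pos_of_ne_zero hdenom))
    exact ⟨some a, ordAt_some_neg_iff.mpr ha⟩

def HasAtMostOneSimplePole (f : RatFunc ℂ) : Prop :=
  (∀ q, -1 ≤ ordAt f q) ∧ ∀ q q', ordAt f q < 0 → ordAt f q' < 0 → q = q'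

namespace HasAtMostOneSimplePole

variable {f : RatFunc ℂ}

theorem natDegree_denom_le_one (hf : HasAtMostOneSimplePole f) : f.denom.natDegree ≤ 1 := by
  rw [← IsAlgClosed.card_roots_eq_natDegree]
  by_contra! h
  obtain ⟨a, ha⟩ := Multiset.card_pos_iff_exists_mem.mp (zero_lt_one.trans h)
  obtain ⟨b, hb⟩ := Multiset.card_pos_iff_exists_mem.mp
    (by rw [Multiset.card_erase_of_mem ha]; exact Nat.lt_pred_iff.mpr h)
  have hpole : ∀ x ∈ f.denom.roots, ordAt f (some x) < 0 := fun x hx =>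
    ordAt_some_neg_iff.mpr (isRoot_of_mem_roots hx)
  by_cases hab : b = a
  · subst hab
    have h2 : 2 ≤ f.denom.rootMultiplicity b := by
      have := Multiset.count_pos.mpr hb
      rw [Multiset.count_erase_self] at this
      rw [← count_roots]
      omega
    have := hf.1 (some b)
    simp only [ordAt, RatFunc.rootMultiplicity_num_eq_zero (isRoot_of_mem_roots ha)] at this
    omega
  · exact hab (Option.some_injective _
      (hf.2 _ _ (hpole b (Multiset.mem_of_mem_erase hb)) (hpole a ha)))

theorem natDegree_num_le_one (hf : HasAtMostOneSimplePole f) : f.num.natDegree ≤ 1 := by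
  have hdenom := hf.natDegree_denom_le_one
  have hinf := hf.1 none
  simp only [ordAt] at hinf
  by_contra! hnum
  obtain ⟨a, ha⟩ := Complex.exists_root (f := f.denom)
    (natDegree_pos_iff_degree_pos.mp (by omega))
  have := hf.2 none (some a) (by simp only [ordAt]; omega) (ordAt_some_neg_iff.mpr ha)
  simp at this

end HasAtMostOneSimplePole

/-- A polynomial of degree `≤ 1`, read as a section of `𝒪(1)` on `ℙ¹`, evaluated at a point. -/
noncomputable def homEval (p : ℂ[X]) : Option ℂ → ℂ
  | none => p.coeff 1
  | some a => p.eval a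

theorem homEval_some_of_natDegree_le_one {p : ℂ[X]} (hp : p.natDegree ≤ 1) (a : ℂ) :
    homEval p (some a) = p.coeff 1 * a + p.coeff 0 := by
  conv_lhs => rw [eq_X_add_C_of_natDegree_le_one hp]
  simp [homEval]

theorem eq_zero_of_homEval_eq_zero {p : ℂ[X]} (hp : p.natDegree ≤ 1) {q₁ q₂ : Option ℂ}
    (hq : q₁ ≠ q₂) (h₁ : homEval p q₁ = 0) (h₂ : homEval p q₂ = 0) : p = 0 := by
  have hx : p.coeff 1 = 0 := by
    rcases q₁ with _ | a₁ <;> rcases q₂ with _ | a₂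
    · exact absurd rfl hq
    · exact h₁
    · exact h₂
    · rw [homEval_some_of_natDegree_le_one hp] at h₁ h₂
      have : p.coeff 1 * (a₁ - a₂) = 0 := by linear_combination h₁ - h₂
      exact (mul_eq_zero.mp this).resolve_right (sub_ne_zero.mpr fun h => hq (congrArg some h))
  obtain ⟨a, ha⟩ : ∃ a, homEval p (some a) = 0 := by
    rcases q₁ with _ | a₁
    · rcases q₂ with _ | a₂
      exacts [absurd rfl hq, ⟨a₂, h₂⟩]
    · exact ⟨a₁, h₁⟩
  rw [homEval_some_of_natDegree_le_one hp, hx, zero_mul, zero_add] at ha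
  rw [eq_X_add_C_of_natDegree_le_one hp, hx, ha, map_zero, zero_mul, zero_add]

theorem homEval_num_sub_C_mul_denom {f : RatFunc ℂ} (hnum : f.num.natDegree ≤ 1)
    (hdenom : f.denom.natDegree ≤ 1) {q : Option ℂ} (hq : 0 ≤ ordAt f q) :
    homEval (f.num - Polynomial.C (evalAt f q) * f.denom) q = 0 := by
  rcases q with _ | a
  · simp only [ordAt] at hq
    simp only [homEval, evalAt, coeff_sub, coeff_C_mul]
    split_ifs with hdeg
    · rcases (by omega : f.denom.natDegree = 0 ∨ f.denom.natDegree = 1) with h0 | h1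
      · rw [coeff_eq_zero_of_natDegree_lt (by omega), coeff_eq_zero_of_natDegree_lt (by omega)]
        ring
      · have hlead : f.denom.coeff 1 = 1 := h1 ▸ f.monic_denom.coeff_natDegree
        rw [f.monic_denom.leadingCoeff, hlead, leadingCoeff, hdeg, h1]
        ring
    · rw [coeff_eq_zero_of_natDegree_lt (by omega)]
      ring
  · have hden : f.denom.eval a ≠ 0 := fun h => (not_lt.mpr hq) (ordAt_some_neg_iff.mpr h)
    simp [homEval, evalAt, RatFunc.eval, hden]

theorem not_hasAtMostOneSimplePole_of_evalAt_eq {f : RatFunc ℂ} (hf : ¬∃ c, f = RatFunc.C c)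
    {q₁ q₂ : Option ℂ} (hq : q₁ ≠ q₂) (h₁ : 0 ≤ ordAt f q₁) (h₂ : 0 ≤ ordAt f q₂)
    (heq : evalAt f q₁ = evalAt f q₂) : ¬HasAtMostOneSimplePole f := by
  intro hpole
  have hnum := hpole.natDegree_num_le_one
  have hdenom := hpole.natDegree_denom_le_one
  refine RatFunc.num_sub_C_mul_denom_ne_zero hf (evalAt f q₁) (eq_zero_of_homEval_eq_zero ?_ hq
    (homEval_num_sub_C_mul_denom hnum hdenom h₁) (heq ▸ homEval_num_sub_C_mul_denom hnum hdenom h₂))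
  exact (natDegree_sub_le _ _).trans (max_le hnum ((natDegree_C_mul_le _ _).trans hdenom))

section EffectiveDivisor

variable {f : RatFunc ℂ} {D : Option ℂ → ℝ}

theorem one_le_of_ordAt_neg (hD : ∀ q, 0 ≤ D q + ordAt f q) {q : Option ℂ}
    (hq : ordAt f q < 0) : 1 ≤ D q := by
  have : (ordAt f q : ℝ) ≤ -1 := by exact_mod_cast Int.le_sub_one_of_lt hq
  linarith [hD q]

theorem ordAt_nonneg_of_eq_zero (hD : ∀ q, 0 ≤ D q + ordAt f q) {q : Option ℂ}
    (hq : D q = 0) : 0 ≤ ordAt f q := by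
  have := hD q
  rw [hq, zero_add] at this
  exact_mod_cast this

theorem two_le_of_evalAt_eq (hD : ∀ q, 0 ≤ D q + ordAt f q) {d : ℝ} (hle : ∀ q, D q ≤ d)
    (hpair : ∀ q q', q ≠ q' → D q + D q' ≤ d) (hf : ¬∃ c, f = RatFunc.C c)
    {q₁ q₂ : Option ℂ} (hq : q₁ ≠ q₂) (h₁ : D q₁ = 0) (h₂ : D q₂ = 0)
    (heq : evalAt f q₁ = evalAt f q₂) : 2 ≤ d := by
  by_contra! hd
  refine not_hasAtMostOneSimplePole_of_evalAt_eq hf hq (ordAt_nonneg_of_eq_zero hD h₁)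
    (ordAt_nonneg_of_eq_zero hD h₂) heq ⟨fun q => ?_, fun q q' hq hq' => ?_⟩
  · have : ((-2 : ℤ) : ℝ) < ordAt f q := by push_cast; linarith [hD q, hle q]
    exact Int.le_of_sub_one_lt (by exact_mod_cast this)
  · by_contra hne
    linarith [hpair q q' hne, one_le_of_ordAt_neg hD hq, one_le_of_ordAt_neg hD hq']

end EffectiveDivisor

namespace TropGraph

variable {n : ℕ} {G : TropGraph n} {φ : PL G} {PΓ : Finset G.V} {E' : Finset G.BE}
  {U' : Finset G.UE} {EΓ : Finset G.BE} {pS pT : G.BE → Option ℂ} {pU : G.UE → Option ℂ}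
  {h : ℝ} {v : G.V} {e : G.BE}

theorem Dcoef_nonneg (q : Option ℂ) : 0 ≤ Dcoef G φ E' U' EΓ pS pT pU h v q := by
  unfold Dcoef
  split_ifs
  · simp only [Finset.sum_filter]
    refine add_nonneg (add_nonneg ?_ ?_) ?_ <;>
      exact Finset.sum_nonneg fun x _ => by split_ifs <;> grind [Int.cast_nonpos]
  · rfl

theorem DdegAt_nonneg : 0 ≤ DdegAt G φ E' U' EΓ h v := by
  unfold DdegAt
  split_ifs
  · simp only [Finset.sum_filter]
    refine add_nonneg (add_nonneg ?_ ?_) ?_ <;>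
      exact Finset.sum_nonneg fun x _ => by split_ifs <;> grind [Int.cast_nonpos]
  · rfl

theorem Dcoef_add_Dcoef_le_DdegAt {q₁ q₂ : Option ℂ} (hq : q₁ ≠ q₂) :
    Dcoef G φ E' U' EΓ pS pT pU h v q₁ + Dcoef G φ E' U' EΓ pS pT pU h v q₂ ≤
      DdegAt G φ E' U' EΓ h v := by
  unfold Dcoef DdegAt
  split_ifs
  · simp only [Finset.sum_filter]
    rw [add_add_add_comm, add_add_add_comm (Finset.sum _ _) (Finset.sum _ _)]
    simp only [← Finset.sum_add_distrib]
    gcongr with x hx <;> split_ifs <;> grind [Int.cast_nonpos]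
  · simp

theorem Dcoef_le_DdegAt (q : Option ℂ) :
    Dcoef G φ E' U' EΓ pS pT pU h v q ≤ DdegAt G φ E' U' EΓ h v := by
  obtain ⟨q', hq'⟩ := exists_ne q
  exact (le_add_of_nonneg_right (Dcoef_nonneg q')).trans (Dcoef_add_Dcoef_le_DdegAt hq'.symm)

theorem sum_DdegAt_le_Ddeg {s : Finset G.V} (hs : s ⊆ PΓ) :
    ∑ w ∈ s, DdegAt G φ E' U' EΓ h w ≤ Ddeg G φ PΓ E' U' EΓ h :=
  Finset.sum_le_sum_of_subset_of_nonneg hs fun _ _ _ => DdegAt_nonneg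

theorem one_le_DdegAt {f : RatFunc ℂ}
    (hdiv : ∀ q, 0 ≤ Dcoef G φ E' U' EΓ pS pT pU h v q + ordAt f q)
    (hf : ¬∃ c, f = RatFunc.C c) : 1 ≤ DdegAt G φ E' U' EΓ h v := by
  obtain ⟨q, hq⟩ := exists_ordAt_neg hf
  exact (one_le_of_ordAt_neg hdiv hq).trans (Dcoef_le_DdegAt q)

variable (G) in
/-- The point `p_e^v` of `ℙ¹_v` at which an edge `e` incident to `v` is attached. -/
noncomputable def nodePoint (pS pT : G.BE → Option ℂ) (v : G.V) (e : G.BE) : Option ℂ :=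
  if G.src e = v then pS e else pT e

variable (G) in
noncomputable def otherEnd (v : G.V) (e : G.BE) : G.V :=
  if G.src e = v then G.tgt e else G.src e

variable (G) in
def Adj (EΓ : Finset G.BE) (a b : G.V) : Prop :=
  ∃ e ∈ EΓ, (G.src e = a ∧ G.tgt e = b) ∨ (G.src e = b ∧ G.tgt e = a)

theorem otherEnd_ne : G.otherEnd v e ≠ v := by
  unfold otherEnd
  split_ifs with hsrc
  exacts [fun htgt => G.src_ne_tgt e (hsrc.trans htgt.symm), hsrc]

theorem otherEnd_mem (hEΓ : ∀ e ∈ EΓ, G.src e ∈ PΓ ∧ G.tgt e ∈ PΓ) (he : e ∈ EΓ) :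
    G.otherEnd v e ∈ PΓ := by
  unfold otherEnd
  split_ifs
  exacts [(hEΓ e he).2, (hEΓ e he).1]

theorem evalAt_nodePoint_of_eq_C {f : G.V → RatFunc ℂ}
    (hmatch : evalAt (f (G.src e)) (pS e) = evalAt (f (G.tgt e)) (pT e))
    (he : G.src e = v ∨ G.tgt e = v) {c : ℂ} (hc : f (G.otherEnd v e) = RatFunc.C c) :
    evalAt (f v) (G.nodePoint pS pT v e) = c := by
  unfold nodePoint
  unfold otherEnd at hc
  split_ifs at hc ⊢ with hsrc
  · rw [← hsrc, hmatch, hc, evalAt_C]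
  · rw [← he.resolve_left hsrc, ← hmatch, hc, evalAt_C]

theorem nodePoint_injOn
    (hS : ∀ e₁ ∈ E', ∀ e₂ ∈ E', G.src e₁ = v → G.src e₂ = v → pS e₁ = pS e₂ → e₁ = e₂)
    (hT : ∀ e₁ ∈ E', ∀ e₂ ∈ E', G.tgt e₁ = v → G.tgt e₂ = v → pT e₁ = pT e₂ → e₁ = e₂)
    (hST : ∀ e₁ ∈ E', ∀ e₂ ∈ E', G.src e₁ = v → G.tgt e₂ = v → pS e₁ ≠ pT e₂) :
    Set.InjOn (G.nodePoint pS pT v) {e | e ∈ E' ∧ (G.src e = v ∨ G.tgt e = v)} := by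
  rintro e₁ ⟨he₁, hinc₁⟩ e₂ ⟨he₂, hinc₂⟩
  unfold nodePoint
  split_ifs with h₁ h₂ h₂
  · exact hS e₁ he₁ e₂ he₂ h₁ h₂
  · exact fun hp => absurd hp (hST e₁ he₁ e₂ he₂ h₁ (hinc₂.resolve_left h₂))
  · exact fun hp => absurd hp.symm (hST e₂ he₂ e₁ he₁ h₂ (hinc₁.resolve_left h₁))
  · exact hT e₁ he₁ e₂ he₂ (hinc₁.resolve_left h₁) (hinc₂.resolve_left h₂)

theorem nodePoint_ne_of_att_eq
    (hSU : ∀ e ∈ E', ∀ u ∈ U', G.src e = v → G.att u = v → pS e ≠ pU u)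
    (hTU : ∀ e ∈ E', ∀ u ∈ U', G.tgt e = v → G.att u = v → pT e ≠ pU u)
    (he' : e ∈ E') (he : G.src e = v ∨ G.tgt e = v) {u : G.UE} (hu : u ∈ U')
    (hatt : G.att u = v) : G.nodePoint pS pT v e ≠ pU u := by
  unfold nodePoint
  split_ifs with hsrc
  exacts [hSU e he' u hu hsrc hatt, hTU e he' u hu (he.resolve_left hsrc) hatt]

theorem Dcoef_nodePoint_eq_zero
    (hinj : Set.InjOn (G.nodePoint pS pT v) {e | e ∈ E' ∧ (G.src e = v ∨ G.tgt e = v)})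
    (hSU : ∀ e ∈ E', ∀ u ∈ U', G.src e = v → G.att u = v → pS e ≠ pU u)
    (hTU : ∀ e ∈ E', ∀ u ∈ U', G.tgt e = v → G.att u = v → pT e ≠ pU u)
    (hEΓsub : EΓ ⊆ E') (heΓ : e ∈ EΓ) (he : G.src e = v ∨ G.tgt e = v) :
    Dcoef G φ E' U' EΓ pS pT pU h v (G.nodePoint pS pT v e) = 0 := by
  have hbd : ∀ e' ∈ E', e' ∉ EΓ → (G.src e' = v ∨ G.tgt e' = v) →
      G.nodePoint pS pT v e' ≠ G.nodePoint pS pT v e := fun e' he' he'Γ hinc hp =>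
    he'Γ (hinj ⟨he', hinc⟩ ⟨hEΓsub heΓ, he⟩ hp ▸ heΓ)
  unfold Dcoef
  split_ifs
  · rw [Finset.filter_false_of_mem, Finset.filter_false_of_mem, Finset.filter_false_of_mem]
    · simp
    · rintro u hu ⟨hatt, -, hp⟩
      exact nodePoint_ne_of_att_eq hSU hTU (hEΓsub heΓ) he hu hatt hp.symm
    · rintro e' he' ⟨he'Γ, htgt, -, hp⟩
      refine hbd e' he' he'Γ (Or.inr htgt) ?_
      rwa [nodePoint, if_neg fun hsrc => G.src_ne_tgt e' (hsrc.trans htgt.symm)]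
    · rintro e' he' ⟨he'Γ, hsrc, -, hp⟩
      exact hbd e' he' he'Γ (Or.inl hsrc) (by rwa [nodePoint, if_pos hsrc])
  · rfl

theorem exists_incident_of_reflTransGen {b : G.V} (hvb : Relation.ReflTransGen (G.Adj EΓ) v b)
    (hb : b ≠ v) : ∃ e ∈ EΓ, G.src e = v ∨ G.tgt e = v := by
  rcases hvb.cases_head with hvb | ⟨_, ⟨e, he, hends⟩, -⟩
  · exact absurd hvb.symm hb
  · exact ⟨e, he, hends.imp And.left And.right⟩

theorem exists_two_incident (hinc : ∃ e ∈ EΓ, G.src e = v ∨ G.tgt e = v)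
    (hval : (EΓ.filter (fun e => G.src e = v)).card +
      (EΓ.filter (fun e => G.tgt e = v)).card ≠ 1) :
    ∃ e₁ ∈ EΓ, ∃ e₂ ∈ EΓ, e₁ ≠ e₂ ∧ (G.src e₁ = v ∨ G.tgt e₁ = v) ∧
      (G.src e₂ = v ∨ G.tgt e₂ = v) := by
  have hcard : (EΓ.filter (fun e => G.src e = v ∨ G.tgt e = v)).card =
      (EΓ.filter (fun e => G.src e = v)).card + (EΓ.filter (fun e => G.tgt e = v)).card := by
    rw [Finset.filter_or, Finset.card_union_of_disjoint (Finset.disjoint_filter.mpr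
      fun e _ hsrc htgt => G.src_ne_tgt e (hsrc.trans htgt.symm))]
  obtain ⟨e, he, heinc⟩ := hinc
  have hpos : 0 < (EΓ.filter (fun e => G.src e = v ∨ G.tgt e = v)).card :=
    Finset.card_pos.mpr ⟨e, Finset.mem_filter.mpr ⟨he, heinc⟩⟩
  obtain ⟨e₁, he₁, e₂, he₂, hne⟩ := Finset.one_lt_card.mp (by omega :
    1 < (EΓ.filter (fun e => G.src e = v ∨ G.tgt e = v)).card)
  rw [Finset.mem_filter] at he₁ he₂
  exact ⟨e₁, he₁.1, e₂, he₂.1, hne, he₁.2, he₂.2⟩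

theorem eq_of_reflTransGen_avoiding {f : G.V → RatFunc ℂ}
    (hEΓ : ∀ e ∈ EΓ, G.src e ∈ PΓ ∧ G.tgt e ∈ PΓ)
    (hmatch : ∀ e ∈ EΓ, evalAt (f (G.src e)) (pS e) = evalAt (f (G.tgt e)) (pT e))
    (hconst : ∀ w ∈ PΓ, w ≠ v → ∃ c, f w = RatFunc.C c) {a b : G.V}
    (hab : Relation.ReflTransGen (fun a b => a ≠ v ∧ b ≠ v ∧ G.Adj EΓ a b) a b) :
    f a = f b := by
  have hedge : ∀ e ∈ EΓ, G.src e ≠ v → G.tgt e ≠ v → f (G.src e) = f (G.tgt e) := by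
    intro e he hsrc htgt
    obtain ⟨c₁, hc₁⟩ := hconst _ (hEΓ e he).1 hsrc
    obtain ⟨c₂, hc₂⟩ := hconst _ (hEΓ e he).2 htgt
    have := hmatch e he
    rw [hc₁, hc₂, evalAt_C, evalAt_C] at this
    rw [hc₁, hc₂, this]
  induction hab with
  | refl => rfl
  | tail _ hstep ih =>
    obtain ⟨hb, hc, e, he, ⟨rfl, rfl⟩ | ⟨rfl, rfl⟩⟩ := hstep
    · exact ih.trans (hedge e he hb hc)
    · exact ih.trans (hedge e he hc hb).symm

theorem two_le_DdegAt {f : G.V → RatFunc ℂ} (hEΓsub : EΓ ⊆ E')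
    (hEΓ : ∀ e ∈ EΓ, G.src e ∈ PΓ ∧ G.tgt e ∈ PΓ)
    (hS : ∀ e₁ ∈ E', ∀ e₂ ∈ E', G.src e₁ = v → G.src e₂ = v → pS e₁ = pS e₂ → e₁ = e₂)
    (hT : ∀ e₁ ∈ E', ∀ e₂ ∈ E', G.tgt e₁ = v → G.tgt e₂ = v → pT e₁ = pT e₂ → e₁ = e₂)
    (hST : ∀ e₁ ∈ E', ∀ e₂ ∈ E', G.src e₁ = v → G.tgt e₂ = v → pS e₁ ≠ pT e₂)
    (hSU : ∀ e ∈ E', ∀ u ∈ U', G.src e = v → G.att u = v → pS e ≠ pU u)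
    (hTU : ∀ e ∈ E', ∀ u ∈ U', G.tgt e = v → G.att u = v → pT e ≠ pU u)
    (hdiv : ∀ q, 0 ≤ Dcoef G φ E' U' EΓ pS pT pU h v q + ordAt (f v) q)
    (hmatch : ∀ e ∈ EΓ, evalAt (f (G.src e)) (pS e) = evalAt (f (G.tgt e)) (pT e))
    (hf : ¬∃ c, f v = RatFunc.C c) (hconst : ∀ w ∈ PΓ, w ≠ v → ∃ c, f w = RatFunc.C c)
    (hconn : ∀ a ∈ PΓ, ∀ b ∈ PΓ, a ≠ v → b ≠ v →
      Relation.ReflTransGen (fun a b => a ≠ v ∧ b ≠ v ∧ G.Adj EΓ a b) a b)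
    {e₁ e₂ : G.BE} (he₁ : e₁ ∈ EΓ) (he₂ : e₂ ∈ EΓ) (hne : e₁ ≠ e₂)
    (hinc₁ : G.src e₁ = v ∨ G.tgt e₁ = v) (hinc₂ : G.src e₂ = v ∨ G.tgt e₂ = v) :
    2 ≤ DdegAt G φ E' U' EΓ h v := by
  have hinj := nodePoint_injOn hS hT hST
  obtain ⟨c, hc₁⟩ := hconst _ (otherEnd_mem hEΓ he₁) otherEnd_ne
  have hc₂ : f (G.otherEnd v e₂) = RatFunc.C c := hc₁ ▸ (eq_of_reflTransGen_avoiding hEΓ hmatch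
    hconst (hconn _ (otherEnd_mem hEΓ he₁) _ (otherEnd_mem hEΓ he₂) otherEnd_ne otherEnd_ne)).symm
  refine two_le_of_evalAt_eq hdiv Dcoef_le_DdegAt (fun _ _ => Dcoef_add_Dcoef_le_DdegAt) hf
    (fun hp => hne (hinj ⟨hEΓsub he₁, hinc₁⟩ ⟨hEΓsub he₂, hinc₂⟩ hp))
    (Dcoef_nodePoint_eq_zero hinj hSU hTU hEΓsub he₁ hinc₁)
    (Dcoef_nodePoint_eq_zero hinj hSU hTU hEΓsub he₂ hinc₂) ?_
  rw [evalAt_nodePoint_of_eq_C (hmatch e₁ he₁) hinc₁ hc₁,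
    evalAt_nodePoint_of_eq_C (hmatch e₂ he₂) hinc₂ hc₂]

end TropGraph

open TropGraph in
theorem c0ample_necessity_two_connected_general
    {n : ℕ} (G : TropGraph n) (φ : TropGraph.PL G)
    (E' : Finset G.BE) (U' : Finset G.UE)
    (PΓ : Finset G.V) (EΓ : Finset G.BE) (hΓne : PΓ.Nonempty)
    (pS pT : G.BE → Option ℂ) (pU : G.UE → Option ℂ)
    -- Γ = (PΓ, EΓ) is a bounded connected subgraph of Γ'
    (hEΓsub : EΓ ⊆ E')
    (hEΓ : ∀ e ∈ EΓ, G.src e ∈ PΓ ∧ G.tgt e ∈ PΓ)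
    (hΓconn : ∀ a ∈ PΓ, ∀ b ∈ PΓ, Relation.ReflTransGen
      (fun a b => ∃ e ∈ EΓ, (G.src e = a ∧ G.tgt e = b) ∨ (G.src e = b ∧ G.tgt e = a)) a b)
    -- for each vertex v of Γ, the chosen node and boundary points on the
    -- component ℙ¹_v are pairwise distinct
    (hdist : ∀ v ∈ PΓ,
      (∀ e₁ ∈ E', ∀ e₂ ∈ E', G.src e₁ = v → G.src e₂ = v → pS e₁ = pS e₂ → e₁ = e₂) ∧
      (∀ e₁ ∈ E', ∀ e₂ ∈ E', G.tgt e₁ = v → G.tgt e₂ = v → pT e₁ = pT e₂ → e₁ = e₂) ∧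
      (∀ u₁ ∈ U', ∀ u₂ ∈ U', G.att u₁ = v → G.att u₂ = v → pU u₁ = pU u₂ → u₁ = u₂) ∧
      (∀ e₁ ∈ E', ∀ e₂ ∈ E', G.src e₁ = v → G.tgt e₂ = v → pS e₁ ≠ pT e₂) ∧
      (∀ e₁ ∈ E', ∀ u ∈ U', G.src e₁ = v → G.att u = v → pS e₁ ≠ pU u) ∧
      (∀ e₁ ∈ E', ∀ u ∈ U', G.tgt e₁ = v → G.att u = v → pT e₁ ≠ pU u))
    -- Γ is 2-vertex connected: deleting any single vertex leaves it connected
    (h2conn : ∀ u ∈ PΓ, ∀ a ∈ PΓ, ∀ b ∈ PΓ, a ≠ u → b ≠ u →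
      Relation.ReflTransGen (fun a b => a ≠ u ∧ b ≠ u ∧
        ∃ e ∈ EΓ, (G.src e = a ∧ G.tgt e = b) ∨ (G.src e = b ∧ G.tgt e = a)) a b)
    -- Γ has at least two vertices
    (hcard : 2 ≤ PΓ.card)
    -- Γ has no 1-valent vertices
    (hval : ∀ w ∈ PΓ,
      (EΓ.filter (fun e => G.src e = w)).card +
        (EΓ.filter (fun e => G.tgt e = w)).card ≠ 1)
    -- φ is C₀-ample on Γ in Γ'
    (hample : C0Ample G φ PΓ E' U' EΓ pS pT pU (PΓ.inf' hΓne φ.val)) :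
    2 ≤ Ddeg G φ PΓ E' U' EΓ (PΓ.inf' hΓne φ.val) ∧
      ∀ v ∈ PΓ, φ.val v = PΓ.inf' hΓne φ.val →
        1 ≤ DdegAt G φ E' U' EΓ (PΓ.inf' hΓne φ.val) v := by
  obtain ⟨f, hdiv, hmatch, hnonconst⟩ := hample
  set h := PΓ.inf' hΓne φ.val
  have hmin : ∀ v ∈ PΓ, φ.val v = h → 1 ≤ DdegAt G φ E' U' EΓ h v := fun v hv hvh =>
    one_le_DdegAt (hdiv v hv) ((hnonconst v hv).mpr hvh)
  refine ⟨?_, hmin⟩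
  obtain ⟨v₀, hv₀, hv₀h⟩ := Finset.exists_mem_eq_inf' hΓne φ.val
  by_cases hsecond : ∃ w ∈ PΓ, w ≠ v₀ ∧ φ.val w = h
  · obtain ⟨w, hw, hwv₀, hwh⟩ := hsecond
    calc 2 ≤ DdegAt G φ E' U' EΓ h w + DdegAt G φ E' U' EΓ h v₀ := by
          linarith [hmin w hw hwh, hmin v₀ hv₀ hv₀h.symm]
      _ = ∑ x ∈ {w, v₀}, DdegAt G φ E' U' EΓ h x := (Finset.sum_pair hwv₀).symm
      _ ≤ Ddeg G φ PΓ E' U' EΓ h :=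
          sum_DdegAt_le_Ddeg (Finset.insert_subset hw (Finset.singleton_subset_iff.mpr hv₀))
  · have hconst : ∀ w ∈ PΓ, w ≠ v₀ → ∃ c, f w = RatFunc.C c := fun w hw hwv₀ =>
      not_not.mp fun hw' => hsecond ⟨w, hw, hwv₀, (hnonconst w hw).mp hw'⟩
    obtain ⟨hS, hT, -, hST, hSU, hTU⟩ := hdist v₀ hv₀
    obtain ⟨b, hb, hbv₀⟩ := Finset.exists_mem_ne hcard v₀
    obtain ⟨e₁, he₁, e₂, he₂, hne, hinc₁, hinc₂⟩ := exists_two_incident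
      (exists_incident_of_reflTransGen (hΓconn v₀ hv₀ b hb) hbv₀) (hval v₀ hv₀)
    calc 2 ≤ DdegAt G φ E' U' EΓ h v₀ :=
          two_le_DdegAt hEΓsub hEΓ hS hT hST hSU hTU (hdiv v₀ hv₀) hmatch
            ((hnonconst v₀ hv₀).mpr hv₀h.symm) hconst (h2conn v₀ hv₀) he₁ he₂ hne hinc₁ hinc₂
      _ = ∑ x ∈ {v₀}, DdegAt G φ E' U' EΓ h x := (Finset.sum_singleton _ _).symm
      _ ≤ Ddeg G φ PΓ E' U' EΓ h := sum_DdegAt_le_Ddeg (Finset.singleton_subset_iff.mpr hv₀)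

open TropGraph in
/-- Necessity for 2-vertex-connected subgraphs: suppose `Γ` is
2-vertex connected (deleting any single vertex leaves it connected), has at least two
vertices, and has no 1-valent vertices.  If `φ` is `C₀`-ample on `Γ` in `Γ'`, then
`deg(D_φ) ≥ 2` and `deg(D_φ|_{ℙ¹_v}) ≥ 1` for every vertex `v` of `Γ` with
`φ(v) = h`, where `h = min_{v ∈ V(Γ)} φ(v)`. -/
theorem c0ample_necessity_two_connected
    {n : ℕ} (G : TropGraph n) (φ : TropGraph.PL G)
    (P' : Finset G.V) (E' : Finset G.BE) (U' : Finset G.UE)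
    (PΓ : Finset G.V) (EΓ : Finset G.BE) (hΓne : PΓ.Nonempty)
    (pS pT : G.BE → Option ℂ) (pU : G.UE → Option ℂ)
    -- Γ' = (P', E', U') is a subgraph of Σ
    (hE' : ∀ e ∈ E', G.src e ∈ P' ∧ G.tgt e ∈ P')
    (hU' : ∀ u ∈ U', G.att u ∈ P')
    -- Γ = (PΓ, EΓ) is a bounded connected subgraph of Γ'
    (hPΓ : ∀ w ∈ PΓ, w ∈ P') (hEΓsub : EΓ ⊆ E')
    (hEΓ : ∀ e ∈ EΓ, G.src e ∈ PΓ ∧ G.tgt e ∈ PΓ)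
    (hΓconn : ∀ a ∈ PΓ, ∀ b ∈ PΓ, Relation.ReflTransGen
      (fun a b => ∃ e ∈ EΓ, (G.src e = a ∧ G.tgt e = b) ∨ (G.src e = b ∧ G.tgt e = a)) a b)
    -- Γ is contained in the interior of Γ': no vertex of Γ is incident to an
    -- edge of Σ not in Γ'
    (hinter : ∀ w ∈ PΓ, (∀ e : G.BE, (G.src e = w ∨ G.tgt e = w) → e ∈ E') ∧
      ∀ u : G.UE, G.att u = w → u ∈ U')
    -- for each vertex v of Γ, the chosen node and boundary points on the
    -- component ℙ¹_v are pairwise distinct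
    (hdist : ∀ v ∈ PΓ,
      (∀ e₁ ∈ E', ∀ e₂ ∈ E', G.src e₁ = v → G.src e₂ = v → pS e₁ = pS e₂ → e₁ = e₂) ∧
      (∀ e₁ ∈ E', ∀ e₂ ∈ E', G.tgt e₁ = v → G.tgt e₂ = v → pT e₁ = pT e₂ → e₁ = e₂) ∧
      (∀ u₁ ∈ U', ∀ u₂ ∈ U', G.att u₁ = v → G.att u₂ = v → pU u₁ = pU u₂ → u₁ = u₂) ∧
      (∀ e₁ ∈ E', ∀ e₂ ∈ E', G.src e₁ = v → G.tgt e₂ = v → pS e₁ ≠ pT e₂) ∧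
      (∀ e₁ ∈ E', ∀ u ∈ U', G.src e₁ = v → G.att u = v → pS e₁ ≠ pU u) ∧
      (∀ e₁ ∈ E', ∀ u ∈ U', G.tgt e₁ = v → G.att u = v → pT e₁ ≠ pU u))
    -- Γ is 2-vertex connected: deleting any single vertex leaves it connected
    (h2conn : ∀ u ∈ PΓ, ∀ a ∈ PΓ, ∀ b ∈ PΓ, a ≠ u → b ≠ u →
      Relation.ReflTransGen (fun a b => a ≠ u ∧ b ≠ u ∧
        ∃ e ∈ EΓ, (G.src e = a ∧ G.tgt e = b) ∨ (G.src e = b ∧ G.tgt e = a)) a b)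
    -- Γ has at least two vertices
    (hcard : 2 ≤ PΓ.card)
    -- Γ has no 1-valent vertices
    (hval : ∀ w ∈ PΓ,
      (EΓ.filter (fun e => G.src e = w)).card +
        (EΓ.filter (fun e => G.tgt e = w)).card ≠ 1)
    -- φ is C₀-ample on Γ in Γ'
    (hample : C0Ample G φ PΓ E' U' EΓ pS pT pU (PΓ.inf' hΓne φ.val)) :
    2 ≤ Ddeg G φ PΓ E' U' EΓ (PΓ.inf' hΓne φ.val) ∧
      ∀ v ∈ PΓ, φ.val v = PΓ.inf' hΓne φ.val →
        1 ≤ DdegAt G φ E' U' EΓ (PΓ.inf' hΓne φ.val) v :=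
  c0ample_necessity_two_connected_general G φ E' U' PΓ EΓ hΓne pS pT pU hEΓsub hEΓ hΓconn hdist
    h2conn hcard hval hample
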